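/- Let X be a nonempty finite set, m a natural number, D a probability distribution on X, F a family of functions from X to [0,1], γ > 0, and T̄, T̃ : (X × {0,1})^m → [0,1]. Suppose that T̃ is a (Γ_m(F), γ)-regular simulator for T̄ under the distribution on (X × {0,1})^m in which x_1, ..., x_m are drawn i.i.d. from D and y_1, ..., y_m are i.i.d. uniform bits independent of the x_i; that is, |E[C(x, y)·(T̄(x, y) − T̃(x, y))]| ≤ γ for every C ∈ Γ_m(F), where the expectation is over this distribution. Then for every f̃ ∈ F, |E[T̄(x, ỹ)] − E[T̃(x, ỹ)]| ≤ 2^m·γ, where x_1, ..., x_m are drawn i.i.d. from D and each label ỹ_i given x_i is an independent Bernoulli(f̃(x_i)) bit. -/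

import Mathlib

attribute [local instance] Classical.propDecidable

/-- `bern p b` is the probability that a Bernoulli(`p`) bit equals `b`. -/
noncomputable def bern (p : ℝ) (b : Bool) : ℝ := if b then p else 1 - p

/-- Expectation of `S : (X × {0,1})^m → ℝ` when `x 1, …, x m` are drawn i.i.d. from
the distribution `D` on `X` and each label `y i` given `x i` is an independent
Bernoulli(`f (x i)`) bit.  (Taking `f = 1/2` gives i.i.d. uniform labels.) -/
noncomputable def labeledExp {X : Type*} [Fintype X] (m : ℕ)
    (D : X → ℝ) (f : X → ℝ) (S : (Fin m → X) → (Fin m → Bool) → ℝ) : ℝ :=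
  ∑ x : Fin m → X, ∑ y : Fin m → Bool,
    (∏ i, D (x i)) * (∏ i, bern (f (x i)) (y i)) * S x y

/-!
A Bernoulli(`p`) bit has the law of `1[U ≤ p]` for `U` uniform on `[0,1]`. Drawing independent
uniform thresholds `t i`, the sample with Bernoulli(`f̃ (x i)`) labels is thus the average over `t`
of the sample with labels `y i = 1[t i ≤ f̃ (x i)]`, and the latter has density `2^m · C_t`
with respect to the sample with uniform labels, `C_t ∈ Γ_m(F)` being the consistency indicator
of `f̃` with thresholds `t`. Hence `E_f̃[T̄ - T̃] = ∫ 2^m · E_unif[C_t · (T̄ - T̃)] dt`, and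
regularity bounds every integrand by `2^m γ`.
-/

open MeasureTheory unitInterval

section

variable {X : Type*} {m : ℕ}

noncomputable def consistencyIndicator (f : X → ℝ) (t : Fin m → ℝ)
    (x : Fin m → X) (y : Fin m → Bool) : ℝ :=
  if ∀ i, (y i = true ↔ t i ≤ f (x i)) then 1 else 0

lemma measurableSet_threshold (b : Bool) (p : ℝ) :
    MeasurableSet {u : I | b = true ↔ (u : ℝ) ≤ p} := by
  have h : MeasurableSet {u : I | (u : ℝ) ≤ p} :=
    measurableSet_Iic.preimage measurable_subtype_coe
  cases b
  · convert h.compl using 1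
    ext; simp
  · simpa using h

lemma ite_threshold_eq_indicator (b : Bool) (p : ℝ) :
    (fun u : I => if (b = true ↔ (u : ℝ) ≤ p) then (1 : ℝ) else 0) =
      {u : I | b = true ↔ (u : ℝ) ≤ p}.indicator 1 := by
  ext u
  simp [Set.indicator_apply]

lemma integrable_ite_threshold (b : Bool) (p : ℝ) :
    Integrable fun u : I => if (b = true ↔ (u : ℝ) ≤ p) then (1 : ℝ) else 0 := by
  rw [ite_threshold_eq_indicator]
  exact (integrable_const 1).indicator (measurableSet_threshold b p)

lemma integral_ite_threshold {p : ℝ} (hp : p ∈ Set.Icc 0 1) (b : Bool) :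
    ∫ u : I, (if (b = true ↔ (u : ℝ) ≤ p) then (1 : ℝ) else 0) = bern p b := by
  rw [ite_threshold_eq_indicator, integral_indicator_one (measurableSet_threshold b p),
    measureReal_def]
  lift p to I using hp
  cases b
  · have : {u : I | false = true ↔ (u : ℝ) ≤ p} = Set.Ioi p := by ext; simp
    rw [this, volume_Ioi, ENNReal.toReal_ofReal (by simp [p.2.2])]
    rfl
  · have : {u : I | true = true ↔ (u : ℝ) ≤ p} = Set.Iic p := by ext; simp
    rw [this, volume_Iic, ENNReal.toReal_ofReal p.2.1]
    rfl

lemma consistencyIndicator_eq_prod (f : X → ℝ) (t : Fin m → ℝ)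
    (x : Fin m → X) (y : Fin m → Bool) :
    consistencyIndicator f t x y = ∏ i, if (y i = true ↔ t i ≤ f (x i)) then (1 : ℝ) else 0 := by
  rw [Fintype.prod_boole, consistencyIndicator]
  congr

lemma integrable_consistencyIndicator (f : X → ℝ) (x : Fin m → X) (y : Fin m → Bool) :
    Integrable (fun t : Fin m → I => consistencyIndicator f (fun i => t i) x y) := by
  simp only [consistencyIndicator_eq_prod]
  exact Integrable.fintype_prod fun i => integrable_ite_threshold (y i) (f (x i))

lemma prod_bern_eq_integral_consistencyIndicator {f : X → ℝ}
    (hf : ∀ x, f x ∈ Set.Icc (0 : ℝ) 1) (x : Fin m → X) (y : Fin m → Bool) :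
    ∏ i, bern (f (x i)) (y i) = ∫ t : Fin m → I, consistencyIndicator f (fun i => t i) x y := by
  simp only [consistencyIndicator_eq_prod]
  rw [integral_fintype_prod_volume_eq_prod
    (fun i (u : I) => if (y i = true ↔ (u : ℝ) ≤ f (x i)) then (1 : ℝ) else 0)]
  exact Finset.prod_congr rfl fun i _ => (integral_ite_threshold (hf (x i)) (y i)).symm

lemma labeledExp_sub [Fintype X] {D f : X → ℝ}
    (S S' : (Fin m → X) → (Fin m → Bool) → ℝ) :
    labeledExp m D f S - labeledExp m D f S' = labeledExp m D f (fun x y => S x y - S' x y) := by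
  simp only [labeledExp, ← Finset.sum_sub_distrib, mul_sub]

lemma two_pow_mul_labeledExp_half [Fintype X] {D : X → ℝ}
    (S : (Fin m → X) → (Fin m → Bool) → ℝ) :
    2 ^ m * labeledExp m D (fun _ => 1 / 2) S =
      ∑ x : Fin m → X, ∑ y : Fin m → Bool, (∏ i, D (x i)) * S x y := by
  have hbern : ∀ b, bern (1 / 2) b = 1 / 2 := by rintro (_ | _) <;> norm_num [bern]
  simp only [labeledExp, hbern, Finset.prod_const, Finset.card_univ, Fintype.card_fin,
    Finset.mul_sum]
  refine Fintype.sum_congr _ _ fun x => Fintype.sum_congr _ _ fun y => ?_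
  rw [div_pow, one_pow]
  field_simp

lemma labeledExp_eq_integral [Fintype X] {D f : X → ℝ}
    (hf : ∀ x, f x ∈ Set.Icc (0 : ℝ) 1) (S : (Fin m → X) → (Fin m → Bool) → ℝ) :
    labeledExp m D f S = ∫ t : Fin m → I, 2 ^ m * labeledExp m D (fun _ => 1 / 2)
      (fun x y => consistencyIndicator f (fun i => t i) x y * S x y) := by
  have hint : ∀ x y, Integrable (fun t : Fin m → I =>
      (∏ i, D (x i)) * (consistencyIndicator f (fun i => t i) x y * S x y)) := fun x y =>
    ((integrable_consistencyIndicator f x y).mul_const _).const_mul _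
  simp_rw [two_pow_mul_labeledExp_half]
  rw [integral_finsetSum _ fun x _ => integrable_finsetSum _ fun y _ => hint x y]
  refine Fintype.sum_congr _ _ fun x => ?_
  rw [integral_finsetSum _ fun y _ => hint x y]
  refine Fintype.sum_congr _ _ fun y => ?_
  rw [integral_const_mul, integral_mul_const, ← prod_bern_eq_integral_consistencyIndicator hf]
  ring

end

theorem stmt_6 {X : Type*} [Fintype X] (m : ℕ)
    (D : X → ℝ)
    (F : Set (X → ℝ)) (hF : ∀ f ∈ F, ∀ x, f x ∈ Set.Icc (0 : ℝ) 1)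
    (γ : ℝ)
    (Tbar Ttil : (Fin m → X) → (Fin m → Bool) → ℝ)
    (hreg : ∀ f ∈ F, ∀ t : Fin m → ℝ,
      |labeledExp m D (fun _ => (1 : ℝ) / 2)
        (fun x y =>
          (if ∀ i, (y i = true ↔ t i ≤ f (x i)) then (1 : ℝ) else 0) *
            (Tbar x y - Ttil x y))| ≤ γ) :
    ∀ ftil ∈ F,
      |labeledExp m D ftil Tbar - labeledExp m D ftil Ttil| ≤ 2 ^ m * γ := by
  intro ftil hftil
  rw [labeledExp_sub, labeledExp_eq_integral (hF ftil hftil)]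
  have hbound : ∀ t : Fin m → I, ‖2 ^ m * labeledExp m D (fun _ => 1 / 2)
      (fun x y => consistencyIndicator ftil (fun i => t i) x y * (Tbar x y - Ttil x y))‖ ≤
        2 ^ m * γ := by
    intro t
    rw [norm_mul, norm_pow, Real.norm_two, Real.norm_eq_abs]
    exact mul_le_mul_of_nonneg_left (hreg ftil hftil _) (by positivity)
  simpa using norm_integral_le_of_norm_le_const (μ := volume) (ae_of_all _ hbound)
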